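/- arXiv:2302.14352 — 10 statements merged into one kernel-verified Lean document; each statement's English description precedes it below -/
import Mathlib

section
/- If A and B are real symmetric n×n matrices that are both positive semidefinite, then A and B are simultaneously diagonalizable via congruence; that is, there exists a nonsingular real matrix P such that both PᵀAP and PᵀBP are diagonal. -/
/-!
A congruence normalizes `A + B` to a diagonal matrix `E` with entries in `{0, 1}`. Since the
congruent copy of `A` lies between `0` and `E`, its rows vanish wherever `E` does, so it commutes
with `E`; an orthonormal eigenbasis of `A + E` then diagonalizes `E` as well, hence also `A` and
`B = E - A`.
-/

open Matrix

namespace Matrix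

section CommRing

variable {R ι : Type*} [CommRing R] [Fintype ι] [DecidableEq ι]

theorem transpose_mul_mul_eq_diagonal_of_mulVec_eq_smul {Q X : Matrix ι ι R} (hQ : Qᵀ * Q = 1)
    {c : ι → R} (h : ∀ j, X *ᵥ Qᵀ j = c j • Qᵀ j) : Qᵀ * X * Q = diagonal c := by
  have hXQ : X * Q = Q * diagonal c := by
    ext i j
    rw [mul_diagonal, mul_apply]
    simpa [mulVec, dotProduct, mul_comm] using congrFun (h j) i
  rw [Matrix.mul_assoc, hXQ, ← Matrix.mul_assoc, hQ, Matrix.one_mul]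

end CommRing

namespace PosSemidef

open scoped ComplexOrder

variable {𝕜 ι : Type*} [RCLike 𝕜] [Fintype ι]

theorem apply_eq_zero_of_diag_eq_zero {X : Matrix ι ι 𝕜} (hX : X.PosSemidef) {i : ι}
    (h : X i i = 0) (j : ι) : X i j = 0 := by
  classical
  have hcol : X *ᵥ Pi.single i 1 = 0 := by
    rw [← hX.dotProduct_mulVec_zero_iff]
    simpa using h
  rw [mulVec_single_one] at hcol
  rw [← hX.1.apply i j]
  simpa using congrFun hcol j

theorem apply_eq_zero_of_add_diag_eq_zero {A B : Matrix ι ι 𝕜} (hA : A.PosSemidef)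
    (hB : B.PosSemidef) {i : ι} (h : (A + B) i i = 0) (j : ι) : A i j = 0 :=
  hA.apply_eq_zero_of_diag_eq_zero
    ((add_eq_zero_iff_of_nonneg hA.diag_nonneg hB.diag_nonneg).mp h).1 j

end PosSemidef

section Real

variable {ι : Type*} [Fintype ι] [DecidableEq ι]

theorem IsHermitian.transpose_eigenvectorUnitary_mul_self {A : Matrix ι ι ℝ}
    (hA : A.IsHermitian) :
    (hA.eigenvectorUnitary : Matrix ι ι ℝ)ᵀ * hA.eigenvectorUnitary = 1 := by
  rw [← conjTranspose_eq_transpose_of_trivial, ← star_eq_conjTranspose]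
  exact Unitary.coe_star_mul_self _

theorem IsHermitian.transpose_eigenvectorUnitary_mul_mul_same {A : Matrix ι ι ℝ}
    (hA : A.IsHermitian) :
    (hA.eigenvectorUnitary : Matrix ι ι ℝ)ᵀ * A * hA.eigenvectorUnitary =
      diagonal hA.eigenvalues :=
  transpose_mul_mul_eq_diagonal_of_mulVec_eq_smul hA.transpose_eigenvectorUnitary_mul_self
    hA.mulVec_eigenvectorBasis

theorem PosSemidef.exists_transpose_mul_mul_eq_diagonal {C : Matrix ι ι ℝ}
    (hC : C.PosSemidef) : ∃ (P : Matrix ι ι ℝ) (e : ι → ℝ), IsUnit P.det ∧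
      Pᵀ * C * P = diagonal e ∧ ∀ i, e i = 0 ∨ e i = 1 := by
  set U : Matrix ι ι ℝ := (hC.1.eigenvectorUnitary : Matrix ι ι ℝ)
  set d := hC.1.eigenvalues
  set s : ι → ℝ := fun i => if d i = 0 then 1 else (√(d i))⁻¹
  have hsqrt : ∀ i, d i ≠ 0 → √(d i) ≠ 0 := fun i =>
    (Real.sqrt_ne_zero (hC.eigenvalues_nonneg i)).mpr
  refine ⟨U * diagonal s, fun i => s i * d i * s i, ?_, ?_, fun i => ?_⟩
  · have hs : ∀ i, s i ≠ 0 := fun i => by by_cases h : d i = 0 <;> simp [s, h, hsqrt]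
    rw [det_mul, det_diagonal]
    exact (isUnit_det_of_left_inverse hC.1.transpose_eigenvectorUnitary_mul_self).mul
      (isUnit_iff_ne_zero.mpr (Finset.prod_ne_zero_iff.mpr fun i _ => hs i))
  · calc (U * diagonal s)ᵀ * C * (U * diagonal s)
          = diagonal s * (Uᵀ * C * U) * diagonal s := by
          simp only [transpose_mul, diagonal_transpose, Matrix.mul_assoc]
      _ = _ := by
          rw [hC.1.transpose_eigenvectorUnitary_mul_mul_same, diagonal_mul_diagonal,
            diagonal_mul_diagonal]
  · by_cases h : d i = 0
    · simp [s, h]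
    · right
      have hsqrt_i := hsqrt i h
      simp only [s, if_neg h]
      field_simp
      exact (Real.sq_sqrt (hC.eigenvalues_nonneg i)).symm

theorem diagonal_mulVec_eq_ite_smul {A : Matrix ι ι ℝ} {e : ι → ℝ} (hA : A.PosSemidef)
    (he : ∀ i, e i = 0 ∨ e i = 1) (hAe : ∀ i, e i = 0 → ∀ j, A i j = 0)
    {v : ι → ℝ} {μ : ℝ} (hv : (A + diagonal e) *ᵥ v = μ • v) :
    diagonal e *ᵥ v = (if μ = 0 then (0 : ℝ) else 1) • v := by
  have hE : (diagonal e).PosSemidef :=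
    posSemidef_diagonal_iff.mpr fun i => by rcases he i with h | h <;> simp [h]
  split_ifs with hμ
  · have hsum : star v ⬝ᵥ (A *ᵥ v) + star v ⬝ᵥ (diagonal e *ᵥ v) = 0 := by
      rw [← dotProduct_add, ← add_mulVec, hv, hμ, zero_smul, dotProduct_zero]
    rw [zero_smul, ← hE.dotProduct_mulVec_zero_iff]
    exact ((add_eq_zero_iff_of_nonneg (hA.dotProduct_mulVec_nonneg v)
      (hE.dotProduct_mulVec_nonneg v)).mp hsum).2
  · ext i
    rw [one_smul, mulVec_diagonal]
    rcases he i with h | h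
    · have hrow : (A *ᵥ v) i = 0 := by simp [mulVec, dotProduct, hAe i h]
      have hi := congrFun hv i
      rw [add_mulVec, Pi.add_apply, hrow, mulVec_diagonal, h, zero_mul, add_zero,
        Pi.smul_apply, smul_eq_mul, eq_comm, mul_eq_zero] at hi
      simp [h, hi.resolve_left hμ]
    · simp [h]

theorem exists_orthogonal_isDiag_of_add_eq_diagonal {A B : Matrix ι ι ℝ} {e : ι → ℝ}
    (hA : A.PosSemidef) (hB : B.PosSemidef) (hAB : A + B = diagonal e)
    (he : ∀ i, e i = 0 ∨ e i = 1) :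
    ∃ Q : Matrix ι ι ℝ, Qᵀ * Q = 1 ∧ (Qᵀ * A * Q).IsDiag ∧ (Qᵀ * B * Q).IsDiag := by
  have hAe : ∀ i, e i = 0 → ∀ j, A i j = 0 := fun i hi =>
    hA.apply_eq_zero_of_add_diag_eq_zero hB (by rw [hAB, diagonal_apply_eq, hi])
  have hM : (A + diagonal e).IsHermitian := hA.1.add (isHermitian_diagonal e)
  set Q : Matrix ι ι ℝ := (hM.eigenvectorUnitary : Matrix ι ι ℝ)
  have hQ : Qᵀ * Q = 1 := hM.transpose_eigenvectorUnitary_mul_self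
  have hMQ : (Qᵀ * (A + diagonal e) * Q).IsDiag := by
    rw [hM.transpose_eigenvectorUnitary_mul_mul_same]
    exact isDiag_diagonal _
  have hEQ : (Qᵀ * diagonal e * Q).IsDiag := by
    rw [transpose_mul_mul_eq_diagonal_of_mulVec_eq_smul hQ fun j =>
      diagonal_mulVec_eq_ite_smul hA he hAe (hM.mulVec_eigenvectorBasis j)]
    exact isDiag_diagonal _
  have hAQ : (Qᵀ * A * Q).IsDiag := by
    simpa [Matrix.mul_add, Matrix.add_mul] using hMQ.sub hEQ
  refine ⟨Q, hQ, hAQ, ?_⟩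
  rw [eq_sub_of_add_eq' hAB]
  simpa [Matrix.mul_sub, Matrix.sub_mul] using hEQ.sub hAQ

end Real

end Matrix

/-- If two real symmetric matrices are both positive semidefinite, they are
simultaneously diagonalizable via congruence. -/
theorem psd_pair_sdc {n : ℕ} (A B : Matrix (Fin n) (Fin n) ℝ)
    (hA : A.PosSemidef) (hB : B.PosSemidef) :
    ∃ P : Matrix (Fin n) (Fin n) ℝ, IsUnit P.det ∧
      (Pᵀ * A * P).IsDiag ∧ (Pᵀ * B * P).IsDiag := by
  obtain ⟨P, e, hP, hPe, he⟩ := (hA.add hB).exists_transpose_mul_mul_eq_diagonal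
  have hcongr : ∀ {X : Matrix (Fin n) (Fin n) ℝ}, X.PosSemidef → (Pᵀ * X * P).PosSemidef :=
    fun hX => by simpa using hX.conjTranspose_mul_mul_same P
  have hsum : Pᵀ * A * P + Pᵀ * B * P = diagonal e := by
    rw [← hPe, Matrix.mul_add, Matrix.add_mul]
  obtain ⟨Q, hQ, hAQ, hBQ⟩ :=
    exists_orthogonal_isDiag_of_add_eq_diagonal (hcongr hA) (hcongr hB) hsum he
  have hconj : ∀ X : Matrix (Fin n) (Fin n) ℝ,
      (P * Q)ᵀ * X * (P * Q) = Qᵀ * (Pᵀ * X * P) * Q :=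
    fun X => by simp only [transpose_mul, Matrix.mul_assoc]
  refine ⟨P * Q, ?_, ?_, ?_⟩
  · rw [det_mul]
    exact hP.mul (isUnit_det_of_left_inverse hQ)
  · rwa [hconj]
  · rwa [hconj]
end

section
/- If A and B are real symmetric n×n matrices that are not simultaneously diagonalizable via congruence, then the set I = {μ ∈ ℝ : A + μB is positive semidefinite} contains at most one element. -/
/-!
Two positive semidefinite matrices `M`, `N` are simultaneously diagonalizable by congruence.
A congruence first makes `E = M + N` idempotent. A vector killed by `E` is then killed by `M` and
by `N` (positivity), which forces `E * M = M` and `E * N = N`; consequently every eigenvector of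
`M + 2 • N` is fixed by `E` or killed by both `M` and `N`, hence an eigenvector of `M` and of `N`,
and a unitary eigenbasis of `M + 2 • N` diagonalizes both.

If `μ₁ ≠ μ₂` both make `A + μ • B` positive semidefinite, then `A` and `B` are linear
combinations of `A + μ₁ • B` and `A + μ₂ • B`, so they are diagonalized by the same congruence.
-/

open Matrix
open scoped ComplexOrder

namespace Matrix

variable {n : Type*} [Fintype n] {𝕜 : Type*} [RCLike 𝕜] {M N : Matrix n n 𝕜}

theorem PosSemidef.mulVec_eq_zero_of_add_mulVec_eq_zero (hM : M.PosSemidef) (hN : N.PosSemidef)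
    {x : n → 𝕜} (h : (M + N) *ᵥ x = 0) : M *ᵥ x = 0 := by
  have h0 : star x ⬝ᵥ M *ᵥ x + star x ⬝ᵥ N *ᵥ x = 0 := by
    rw [← dotProduct_add, ← add_mulVec, h, dotProduct_zero]
  exact (hM.dotProduct_mulVec_zero_iff x).mp <|
    (add_eq_zero_iff_of_nonneg (hM.dotProduct_mulVec_nonneg x) (hN.dotProduct_mulVec_nonneg x)).mp
      h0 |>.1

theorem PosSemidef.add_mul_eq_self_of_isIdempotentElem [DecidableEq n] (hM : M.PosSemidef)
    (hN : N.PosSemidef) (hE : IsIdempotentElem (M + N)) : (M + N) * M = M := by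
  have hright : M * (1 - (M + N)) = 0 := by
    refine ext_of_mulVec_single fun i ↦ ?_
    rw [zero_mulVec, ← mulVec_mulVec]
    refine hM.mulVec_eq_zero_of_add_mulVec_eq_zero hN ?_
    rw [mulVec_mulVec, mul_sub, mul_one, hE.eq, sub_self, zero_mulVec]
  have hleft : (1 - (M + N)) * M = 0 := by
    simpa [conjTranspose_sub, hM.1.eq, (hM.add hN).1.eq] using congrArg (fun X ↦ Xᴴ) hright
  rw [sub_mul, one_mul, sub_eq_zero] at hleft
  exact hleft.symm

theorem PosSemidef.exists_mulVec_eq_smul_of_add_two_smul_mulVec_eq_smul [DecidableEq n]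
    (hM : M.PosSemidef) (hN : N.PosSemidef) (hE : IsIdempotentElem (M + N)) {w : n → 𝕜} {c : 𝕜}
    (hw : (M + 2 • N) *ᵥ w = c • w) : (∃ a : 𝕜, M *ᵥ w = a • w) ∧ ∃ b : 𝕜, N *ᵥ w = b • w := by
  by_cases hc : c = 0
  · rw [hc, zero_smul] at hw
    have h2N : (2 • N).PosSemidef := hN.smul zero_le_two
    have hNw : (2 • N) *ᵥ w = 0 :=
      h2N.mulVec_eq_zero_of_add_mulVec_eq_zero hM (by rwa [add_comm])
    rw [smul_mulVec, smul_eq_zero] at hNw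
    exact ⟨⟨0, by rw [zero_smul, hM.mulVec_eq_zero_of_add_mulVec_eq_zero h2N hw]⟩,
      ⟨0, by rw [zero_smul, hNw.resolve_left two_ne_zero]⟩⟩
  · have hEM := hM.add_mul_eq_self_of_isIdempotentElem hN hE
    have hEN := add_comm M N ▸ hN.add_mul_eq_self_of_isIdempotentElem hM (add_comm M N ▸ hE)
    have hEw : (M + N) *ᵥ w = w := by
      have hEG : (M + N) * (M + 2 • N) = M + 2 • N := by
        rw [mul_add, mul_smul_comm, hEM, hEN]
      refine (smul_right_inj hc).mp ?_
      rw [← mulVec_smul, ← hw, mulVec_mulVec, hEG]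
    rw [add_mulVec] at hEw
    rw [add_mulVec, smul_mulVec] at hw
    refine ⟨⟨2 - c, ?_⟩, ⟨c - 1, ?_⟩⟩
    · linear_combination (norm := module) 2 • hEw - hw
    · linear_combination (norm := module) hw - hEw

theorem isDiag_star_mul_mul_of_forall_mulVec_col [DecidableEq n] (U : unitaryGroup n 𝕜)
    (h : ∀ j, ∃ a : 𝕜, M *ᵥ (U : Matrix n n 𝕜).col j = a • (U : Matrix n n 𝕜).col j) :
    (star (U : Matrix n n 𝕜) * M * U).IsDiag := by
  choose a ha using h
  have hMU : M * U = U * diagonal a := by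
    ext i j
    rw [mul_diagonal, mul_apply]
    simpa [mulVec, dotProduct, mul_comm] using congrFun (ha j) i
  rw [mul_assoc, hMU, ← mul_assoc, Unitary.coe_star_mul_self, one_mul]
  exact isDiag_diagonal a

theorem PosSemidef.exists_unitary_isDiag_of_isIdempotentElem_add [DecidableEq n]
    (hM : M.PosSemidef) (hN : N.PosSemidef) (hE : IsIdempotentElem (M + N)) :
    ∃ U : unitaryGroup n 𝕜, (star (U : Matrix n n 𝕜) * M * U).IsDiag ∧
      (star (U : Matrix n n 𝕜) * N * U).IsDiag := by
  have hG : (M + 2 • N).IsHermitian := (hM.add (hN.smul zero_le_two)).isHermitian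
  have hcol (j : n) := hM.exists_mulVec_eq_smul_of_add_two_smul_mulVec_eq_smul hN hE
    (c := (hG.eigenvalues j : 𝕜)) (w := hG.eigenvectorUnitary.1.col j)
    (by rw [IsHermitian.eigenvectorUnitary_col_eq, hG.mulVec_eigenvectorBasis,
      RCLike.real_smul_eq_coe_smul (K := 𝕜)])
  exact ⟨hG.eigenvectorUnitary, isDiag_star_mul_mul_of_forall_mulVec_col _ fun j ↦ (hcol j).1,
    isDiag_star_mul_mul_of_forall_mulVec_col _ fun j ↦ (hcol j).2⟩

theorem PosSemidef.exists_isIdempotentElem_star_mul_mul [DecidableEq n] {S : Matrix n n 𝕜}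
    (hS : S.PosSemidef) : ∃ Q : Matrix n n 𝕜, IsUnit Q.det ∧ IsIdempotentElem (star Q * S * Q) := by
  set μ := hS.1.eigenvalues
  set U : Matrix n n 𝕜 := (hS.1.eigenvectorUnitary : Matrix n n 𝕜)
  have hμ : ∀ i, μ i ≠ 0 → 0 < μ i := fun i ↦ (hS.eigenvalues_nonneg i).lt_of_ne'
  let f : n → ℝ := fun i ↦ if μ i = 0 then 1 else (√(μ i))⁻¹
  have hf : ∀ i, f i ≠ 0 := by
    intro i
    by_cases h : μ i = 0
    · simp [f, h]
    · simp [f, h, Real.sqrt_ne_zero'.mpr (hμ i h)]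
  have hfμf : ∀ i, f i * μ i * f i = if μ i = 0 then 0 else 1 := by
    intro i
    by_cases h : μ i = 0
    · simp [f, h]
    · simp only [f, h, if_false]
      field_simp
      rw [Real.sq_sqrt (hμ i h).le, div_self h]
  have hUSU : star U * S * U = diagonal (RCLike.ofReal ∘ μ) := by
    simpa using hS.1.conjStarAlgAut_star_eigenvectorUnitary
  set D : Matrix n n 𝕜 := diagonal (RCLike.ofReal ∘ f)
  have hD : star D = D := by
    simp [D, star_eq_conjTranspose, diagonal_conjTranspose]
  have hQ : star (U * D) * S * (U * D) =
      diagonal (RCLike.ofReal ∘ fun i ↦ if μ i = 0 then 0 else 1) := by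
    calc star (U * D) * S * (U * D) = D * (star U * S * U) * D := by
          rw [star_mul, hD]; simp only [mul_assoc]
      _ = _ := by
          rw [hUSU, diagonal_mul_diagonal, diagonal_mul_diagonal, ← funext hfμf]
          simp
  refine ⟨U * D, ?_, ?_⟩
  · rw [det_mul, det_diagonal]
    exact (UnitaryGroup.det_isUnit _).mul
      (isUnit_iff_ne_zero.mpr (Finset.prod_ne_zero_iff.mpr fun i _ ↦ by simpa using hf i))
  · rw [hQ, IsIdempotentElem, diagonal_mul_diagonal]
    congr 1
    funext i
    by_cases h : μ i = 0 <;> simp [h]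

theorem PosSemidef.exists_isDiag_star_mul_mul [DecidableEq n] (hM : M.PosSemidef)
    (hN : N.PosSemidef) : ∃ P : Matrix n n 𝕜, IsUnit P.det ∧ (star P * M * P).IsDiag ∧
      (star P * N * P).IsDiag := by
  obtain ⟨Q, hQ, hE⟩ := (hM.add hN).exists_isIdempotentElem_star_mul_mul
  rw [mul_add, add_mul] at hE
  obtain ⟨U, hUM, hUN⟩ :=
    (hM.conjTranspose_mul_mul_same Q).exists_unitary_isDiag_of_isIdempotentElem_add
      (hN.conjTranspose_mul_mul_same Q) hE
  refine ⟨Q * U, by simpa [det_mul] using hQ.mul (UnitaryGroup.det_isUnit U), ?_, ?_⟩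
  · simpa [star_mul, star_eq_conjTranspose, mul_assoc] using hUM
  · simpa [star_mul, star_eq_conjTranspose, mul_assoc] using hUN

theorem IsDiag.mul_smul_add_smul_mul {R : Type*} [CommRing R] {P Q X Y : Matrix n n R}
    (hX : (Q * X * P).IsDiag) (hY : (Q * Y * P).IsDiag) (a b : R) :
    (Q * (a • X + b • Y) * P).IsDiag := by
  rw [mul_add, add_mul, Matrix.mul_smul, Matrix.mul_smul, Matrix.smul_mul, Matrix.smul_mul]
  exact (hX.smul a).add (hY.smul b)

end Matrix

theorem not_sdc_psd_set_subsingleton_general {n : ℕ} (A B : Matrix (Fin n) (Fin n) ℝ)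
    (hnsdc : ¬ ∃ P : Matrix (Fin n) (Fin n) ℝ, IsUnit P.det ∧
      (Pᵀ * A * P).IsDiag ∧ (Pᵀ * B * P).IsDiag) :
    Set.Subsingleton {μ : ℝ | (A + μ • B).PosSemidef} := by
  intro μ₁ h₁ μ₂ h₂
  by_contra hne
  have hμ : μ₂ - μ₁ ≠ 0 := sub_ne_zero.mpr (Ne.symm hne)
  obtain ⟨P, hP, hD₁, hD₂⟩ := h₁.exists_isDiag_star_mul_mul h₂
  rw [star_eq_conjTranspose, conjTranspose_eq_transpose_of_trivial] at hD₁ hD₂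
  have hA : A = (μ₂ / (μ₂ - μ₁)) • (A + μ₁ • B) + (-μ₁ / (μ₂ - μ₁)) • (A + μ₂ • B) := by
    ext i j
    simp only [Matrix.add_apply, Matrix.smul_apply, smul_eq_mul]
    field_simp
    ring
  have hB : B = (-1 / (μ₂ - μ₁)) • (A + μ₁ • B) + (1 / (μ₂ - μ₁)) • (A + μ₂ • B) := by
    ext i j
    simp only [Matrix.add_apply, Matrix.smul_apply, smul_eq_mul]
    field_simp
    ring
  refine hnsdc ⟨P, hP, ?_, ?_⟩
  · rw [hA]; exact hD₁.mul_smul_add_smul_mul hD₂ _ _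
  · rw [hB]; exact hD₁.mul_smul_add_smul_mul hD₂ _ _

/-- If real symmetric A, B are not SDC, then {μ : A + μB ⪰ 0} has at most one element. -/
theorem not_sdc_psd_set_subsingleton {n : ℕ} (A B : Matrix (Fin n) (Fin n) ℝ)
    (hA : A.IsSymm) (hB : B.IsSymm)
    (hnsdc : ¬ ∃ P : Matrix (Fin n) (Fin n) ℝ, IsUnit P.det ∧
      (Pᵀ * A * P).IsDiag ∧ (Pᵀ * B * P).IsDiag) :
    Set.Subsingleton {μ : ℝ | (A + μ • B).PosSemidef} :=
  not_sdc_psd_set_subsingleton_general A B hnsdc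
end

section
/- If A and B are real symmetric matrices, μ₁ ≠ μ₂ are real numbers such that A + μ₁B ⪰ 0 and A + μ₂B ⪰ 0, then A and B are simultaneously diagonalizable via congruence. -/
/-!
Since `A = (μ₁ - μ₂)⁻¹ • (μ₁ • M₂ - μ₂ • M₁)` and `B = (μ₁ - μ₂)⁻¹ • (M₁ - M₂)` for
`Mᵢ = A + μᵢ • B`, it suffices that two positive semidefinite matrices `M₁, M₂` are SDC.
A congruence turns `M₁ + M₂` into `1 - Q` with `Q` a coordinate projection. The congruent
`N₁, N₂` are then annihilated by `Q`, because a positive semidefinite summand vanishes on the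
kernel of the sum. An orthogonal diagonalization of `N₁ - Q`, whose `-1`-eigenspace is exactly the
range of `Q`, then diagonalizes `N₁` and `Q`, hence also `N₂ = 1 - Q - N₁`.
-/

open Matrix

namespace Matrix

variable {m : Type*} [Fintype m]

open scoped ComplexOrder in
lemma PosSemidef.mul_eq_zero_of_add_mul_eq_zero {𝕜 k : Type*} [RCLike 𝕜] [Fintype k]
    {N₁ N₂ : Matrix m m 𝕜} {B : Matrix m k 𝕜} (h₁ : N₁.PosSemidef) (h₂ : N₂.PosSemidef)
    (h : (N₁ + N₂) * B = 0) : N₁ * B = 0 := by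
  refine ext_iff_mulVec.mpr fun v => ?_
  have hsum : star (B *ᵥ v) ⬝ᵥ (N₁ *ᵥ (B *ᵥ v)) + star (B *ᵥ v) ⬝ᵥ (N₂ *ᵥ (B *ᵥ v)) = 0 := by
    rw [← dotProduct_add, ← add_mulVec, mulVec_mulVec, h, zero_mulVec, dotProduct_zero]
  have hv : star (B *ᵥ v) ⬝ᵥ (N₁ *ᵥ (B *ᵥ v)) = 0 := by
    refine le_antisymm ?_ (h₁.dotProduct_mulVec_nonneg _)
    rw [eq_neg_of_add_eq_zero_left hsum, neg_nonpos]
    exact h₂.dotProduct_mulVec_nonneg _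
  rw [zero_mulVec, ← mulVec_mulVec, (h₁.dotProduct_mulVec_zero_iff _).mp hv]

lemma IsHermitian.exists_transpose_mul_mul_eq_diagonal [DecidableEq m] {M : Matrix m m ℝ}
    (hM : M.IsHermitian) :
    ∃ V : Matrix m m ℝ, Vᵀ * V = 1 ∧ Vᵀ * M * V = diagonal hM.eigenvalues := by
  have hU := (mem_unitaryGroup_iff').mp hM.eigenvectorUnitary.2
  have hD := hM.conjStarAlgAut_star_eigenvectorUnitary
  rw [Unitary.conjStarAlgAut_star_apply] at hD
  simp only [star_eq_conjTranspose, conjTranspose_eq_transpose_of_trivial] at hU hD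
  exact ⟨_, hU, by simpa using hD⟩

/-- A nonzero `Y k l` (`k ≠ l`) forces `(X - Y) l l = -1`, hence `Y l l ≥ 1`; but
`Y l l = ∑ j, Y j l ^ 2` for a symmetric idempotent, which leaves no room for `Y k l`. -/
lemma isDiag_of_sub_isDiag {X Y : Matrix m m ℝ} (hX : X.PosSemidef) (hY : Y.IsHermitian)
    (hYY : Y * Y = Y) (hYX : Y * X = 0) (hXY : (X - Y).IsDiag) : Y.IsDiag := by
  classical
  intro k l hkl
  by_contra hne
  have hYW : Y * diagonal (X - Y).diag = -Y := by
    rw [hXY.diagonal_diag, mul_sub, hYX, hYY, zero_sub]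
  have heig : X l l - Y l l = -1 := by
    have := congrFun (congrFun hYW k) l
    rw [mul_diagonal, neg_apply, diag_apply, sub_apply] at this
    exact mul_left_cancel₀ hne (by linarith)
  have hYll : Y l l = ∑ j, Y j l ^ 2 := by
    conv_lhs => rw [← hYY, mul_apply]
    simp only [sq, ← hY.apply l, star_trivial]
  have hpair : Y l l ^ 2 + Y k l ^ 2 ≤ ∑ j, Y j l ^ 2 := by
    rw [add_comm, ← Finset.sum_pair hkl (f := fun j => Y j l ^ 2)]
    exact Finset.sum_le_sum_of_subset_of_nonneg (Finset.subset_univ _) fun j _ _ => sq_nonneg _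
  have hYk : 0 < Y k l ^ 2 := by positivity
  nlinarith [hX.diag_nonneg (i := l)]

lemma exists_orthogonal_isDiag_of_mul_eq_zero [DecidableEq m] {N Q : Matrix m m ℝ}
    (hN : N.PosSemidef) (hQ : Q.IsHermitian) (hQQ : Q * Q = Q) (hQN : Q * N = 0) :
    ∃ V : Matrix m m ℝ, Vᵀ * V = 1 ∧ (Vᵀ * N * V).IsDiag ∧ (Vᵀ * Q * V).IsDiag := by
  obtain ⟨V, hVV, hVW⟩ := (hN.isHermitian.sub hQ).exists_transpose_mul_mul_eq_diagonal
  have hVV' : V * Vᵀ = 1 := mul_eq_one_comm.mp hVV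
  have hYY : Vᵀ * Q * V * (Vᵀ * Q * V) = Vᵀ * Q * V := by
    rw [show Vᵀ * Q * V * (Vᵀ * Q * V) = Vᵀ * Q * (V * Vᵀ) * Q * V by
        simp only [Matrix.mul_assoc],
      hVV', Matrix.mul_one, Matrix.mul_assoc Vᵀ Q Q, hQQ]
  have hYX : Vᵀ * Q * V * (Vᵀ * N * V) = 0 := by
    rw [show Vᵀ * Q * V * (Vᵀ * N * V) = Vᵀ * Q * (V * Vᵀ) * N * V by
        simp only [Matrix.mul_assoc],
      hVV', Matrix.mul_one, Matrix.mul_assoc Vᵀ Q N, hQN, Matrix.mul_zero, Matrix.zero_mul]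
  have hXY : (Vᵀ * N * V - Vᵀ * Q * V).IsDiag := by
    rw [← Matrix.sub_mul, ← Matrix.mul_sub, hVW]
    exact isDiag_diagonal _
  have hY : (Vᵀ * Q * V).IsDiag :=
    isDiag_of_sub_isDiag (hN.conjTranspose_mul_mul_same V)
      (isHermitian_conjTranspose_mul_mul V hQ) hYY hYX hXY
  exact ⟨V, hVV, by simpa using hXY.add hY, hY⟩

lemma PosSemidef.exists_transpose_mul_mul_add_idempotent_eq_one [DecidableEq m]
    {S : Matrix m m ℝ} (hS : S.PosSemidef) :
    ∃ P : Matrix m m ℝ, IsUnit P.det ∧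
      ∃ Q : Matrix m m ℝ, Q.IsHermitian ∧ Q * Q = Q ∧ Pᵀ * S * P + Q = 1 := by
  obtain ⟨U, hUU, hUS⟩ := hS.isHermitian.exists_transpose_mul_mul_eq_diagonal
  set d := hS.isHermitian.eigenvalues
  let e : m → ℝ := fun i => if d i = 0 then 1 else (√(d i))⁻¹
  let q : m → ℝ := fun i => if d i = 0 then 1 else 0
  have hsq : ∀ i, √(d i) ^ 2 = d i := fun i => Real.sq_sqrt (hS.eigenvalues_nonneg i)
  have hsqrt : ∀ i, d i ≠ 0 → √(d i) ≠ 0 := fun i hi h => hi (by rw [← hsq i, h, sq, zero_mul])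
  have he : ∀ i, e i ≠ 0 := fun i => by
    by_cases hi : d i = 0
    · simp [e, hi]
    · simpa [e, hi] using hsqrt i hi
  refine ⟨U * diagonal e, ?_, diagonal q, isHermitian_diagonal q, ?_, ?_⟩
  · rw [det_mul, det_diagonal]
    exact (isUnit_det_of_left_inverse hUU).mul
      (isUnit_iff_ne_zero.mpr (Finset.prod_ne_zero_iff.mpr fun i _ => he i))
  · rw [diagonal_mul_diagonal]
    congr 1
    ext i
    by_cases hi : d i = 0 <;> simp [q, hi]
  · rw [transpose_mul, diagonal_transpose,
      show diagonal e * Uᵀ * S * (U * diagonal e) = diagonal e * (Uᵀ * S * U) * diagonal e by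
        simp only [Matrix.mul_assoc],
      hUS, diagonal_mul_diagonal, diagonal_mul_diagonal, diagonal_add, ← diagonal_one]
    congr 1
    ext i
    by_cases hi : d i = 0
    · simp [e, q, hi]
    · have := hsqrt i hi
      simp only [e, q, hi, if_false, add_zero]
      field_simp
      exact (hsq i).symm

/-- Simultaneous diagonalizability via congruence. -/
def IsSDC [DecidableEq m] {R : Type*} [CommRing R] (A B : Matrix m m R) : Prop :=
  ∃ P : Matrix m m R, IsUnit P.det ∧ (Pᵀ * A * P).IsDiag ∧ (Pᵀ * B * P).IsDiag

lemma PosSemidef.isSDC [DecidableEq m] {M₁ M₂ : Matrix m m ℝ} (h₁ : M₁.PosSemidef)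
    (h₂ : M₂.PosSemidef) : IsSDC M₁ M₂ := by
  obtain ⟨P, hP, Q, hQ, hQQ, hPQ⟩ := (h₁.add h₂).exists_transpose_mul_mul_add_idempotent_eq_one
  have hN₁ : (Pᵀ * M₁ * P).PosSemidef := h₁.conjTranspose_mul_mul_same P
  have hN₂ : (Pᵀ * M₂ * P).PosSemidef := h₂.conjTranspose_mul_mul_same P
  have hN₁Q : Pᵀ * M₁ * P * Q = 0 := by
    refine hN₁.mul_eq_zero_of_add_mul_eq_zero hN₂ ?_
    rw [← Matrix.add_mul, ← Matrix.mul_add, eq_sub_of_add_eq hPQ, Matrix.sub_mul,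
      hQQ, Matrix.one_mul, sub_self]
  have hQN₁ : Q * (Pᵀ * M₁ * P) = 0 := by
    rw [← hQ.eq, ← hN₁.isHermitian.eq, ← conjTranspose_mul, hN₁Q, conjTranspose_zero]
  obtain ⟨V, hVV, hN₁V, hQV⟩ := exists_orthogonal_isDiag_of_mul_eq_zero hN₁ hQ hQQ hQN₁
  have hcongr (M : Matrix m m ℝ) : (P * V)ᵀ * M * (P * V) = Vᵀ * (Pᵀ * M * P) * V := by
    simp only [transpose_mul, Matrix.mul_assoc]
  have hM₂ : Pᵀ * M₂ * P = 1 - Q - Pᵀ * M₁ * P := by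
    rw [← hPQ, Matrix.mul_add, Matrix.add_mul]
    abel
  refine ⟨P * V, ?_, ?_, ?_⟩
  · rw [det_mul]
    exact hP.mul (isUnit_det_of_left_inverse hVV)
  · rwa [hcongr]
  · rw [hcongr, hM₂, Matrix.mul_sub, Matrix.sub_mul, Matrix.mul_sub, Matrix.sub_mul,
      Matrix.mul_one, hVV]
    exact (isDiag_one.sub hQV).sub hN₁V

lemma IsSDC.of_add_smul [DecidableEq m] {K : Type*} [Field K] {A B : Matrix m m K} {μ₁ μ₂ : K}
    (h : IsSDC (A + μ₁ • B) (A + μ₂ • B)) (hne : μ₁ ≠ μ₂) : IsSDC A B := by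
  obtain ⟨P, hP, h₁, h₂⟩ := h
  simp only [Matrix.mul_add, Matrix.add_mul, Matrix.mul_smul, Matrix.smul_mul] at h₁ h₂
  have hB : Pᵀ * B * P = (μ₁ - μ₂)⁻¹ •
      ((Pᵀ * A * P + μ₁ • (Pᵀ * B * P)) - (Pᵀ * A * P + μ₂ • (Pᵀ * B * P))) := by
    rw [add_sub_add_left_eq_sub, ← sub_smul, smul_smul, inv_mul_cancel₀ (sub_ne_zero.mpr hne),
      one_smul]
  have hBd : (Pᵀ * B * P).IsDiag := hB ▸ (h₁.sub h₂).smul _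
  have hA : Pᵀ * A * P = (Pᵀ * A * P + μ₁ • (Pᵀ * B * P)) - μ₁ • (Pᵀ * B * P) := by
    rw [add_sub_cancel_right]
  exact ⟨P, hP, hA ▸ h₁.sub (hBd.smul μ₁), hBd⟩

end Matrix

theorem two_psd_values_imp_sdc_general {n : ℕ} (A B : Matrix (Fin n) (Fin n) ℝ)
    (μ₁ μ₂ : ℝ) (hne : μ₁ ≠ μ₂)
    (h1 : (A + μ₁ • B).PosSemidef) (h2 : (A + μ₂ • B).PosSemidef) :
    ∃ P : Matrix (Fin n) (Fin n) ℝ, IsUnit P.det ∧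
      (Pᵀ * A * P).IsDiag ∧ (Pᵀ * B * P).IsDiag :=
  (h1.isSDC h2).of_add_smul hne

/-- If A + μ₁B ⪰ 0 and A + μ₂B ⪰ 0 for μ₁ ≠ μ₂, then A and B are SDC. -/
theorem two_psd_values_imp_sdc {n : ℕ} (A B : Matrix (Fin n) (Fin n) ℝ)
    (hA : A.IsSymm) (hB : B.IsSymm) (μ₁ μ₂ : ℝ) (hne : μ₁ ≠ μ₂)
    (h1 : (A + μ₁ • B).PosSemidef) (h2 : (A + μ₂ • B).PosSemidef) :
    ∃ P : Matrix (Fin n) (Fin n) ℝ, IsUnit P.det ∧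
      (Pᵀ * A * P).IsDiag ∧ (Pᵀ * B * P).IsDiag :=
  two_psd_values_imp_sdc_general A B μ₁ μ₂ hne h1 h2
end

section
/- Let A, B be real symmetric n×n matrices with B nonsingular. Then A and B are simultaneously diagonalizable via congruence if and only if there exists a nonsingular real matrix P such that P⁻¹B⁻¹AP is a real diagonal matrix. -/
open Matrix Module.End

/-!
If `PᵀAP` and `PᵀBP` are diagonal, so is `P⁻¹B⁻¹AP = (PᵀBP)⁻¹(PᵀAP)`. Conversely, if
`D = P⁻¹B⁻¹AP` is diagonal, then `M = PᵀBP` and `MD = PᵀAP` are symmetric, hence `M` and `D`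
commute. Commuting symmetric matrices are diagonalized by one orthogonal `U` (the joint
eigenspaces are orthogonal and span), and then `(PU)ᵀB(PU) = UᵀMU` and
`(PU)ᵀA(PU) = (UᵀMU)(UᵀDU)` are diagonal.
-/

namespace LinearMap.IsSymmetric

variable {𝕜 E : Type*} [RCLike 𝕜] [NormedAddCommGroup E] [InnerProductSpace 𝕜 E]
  [FiniteDimensional 𝕜 E] {S T : E →ₗ[𝕜] E}

theorem exists_orthonormalBasis_forall_mem_eigenspace_inf_eigenspace_of_commute
    {ι : Type*} [Fintype ι] (hι : Module.finrank 𝕜 E = Fintype.card ι)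
    (hS : S.IsSymmetric) (hT : T.IsSymmetric) (hST : Commute S T) :
    ∃ (b : OrthonormalBasis ι 𝕜 E) (μ ν : ι → 𝕜),
      ∀ i, b i ∈ eigenspace S (μ i) ⊓ eigenspace T (ν i) := by
  classical
  let V (α : 𝕜 × 𝕜) := eigenspace S α.2 ⊓ eigenspace T α.1
  have hV : DirectSum.IsInternal V := directSum_isInternal_of_commute hS hT hST
  -- a subordinate orthonormal basis needs a finite index type of summands
  have : Fintype {α // V α ≠ ⊥} := hV.submodule_iSupIndep.fintypeNeBotOfFiniteDimensional
  have hV₀ : DirectSum.IsInternal fun α : {α // V α ≠ ⊥} => V α :=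
    DirectSum.isInternal_ne_bot_iff.mpr hV
  have hV₀' : OrthogonalFamily 𝕜 (fun α : {α // V α ≠ ⊥} => V α) fun α => (V α).subtypeₗᵢ :=
    (orthogonalFamily_eigenspace_inf_eigenspace hS hT).comp Subtype.val_injective
  let e := Fintype.equivFin ι
  refine ⟨(hV₀.subordinateOrthonormalBasis hι hV₀').reindex e.symm,
    fun i => (hV₀.subordinateOrthonormalBasisIndex hι (e i) hV₀').1.2,
    fun i => (hV₀.subordinateOrthonormalBasisIndex hι (e i) hV₀').1.1,
    fun i => ?_⟩
  simpa only [OrthonormalBasis.reindex_apply, Equiv.symm_symm] using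
    hV₀.subordinateOrthonormalBasis_subordinate hι (e i) hV₀'

end LinearMap.IsSymmetric

namespace Matrix

variable {ι : Type*} [Fintype ι]

section CommSemiring

variable {R : Type*} [CommSemiring R]

theorem IsSymm.transpose_mul_mul {A : Matrix ι ι R} (hA : A.IsSymm) (P : Matrix ι ι R) :
    (Pᵀ * A * P).IsSymm := by
  simp only [IsSymm, transpose_mul, transpose_transpose, hA.eq, Matrix.mul_assoc]

theorem IsSymm.commute_iff {A B : Matrix ι ι R} (hA : A.IsSymm) (hB : B.IsSymm) :
    Commute A B ↔ (A * B).IsSymm := by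
  rw [IsSymm, transpose_mul, hA.eq, hB.eq, eq_comm]
  rfl

variable [DecidableEq ι]

theorem IsDiag.mul {A B : Matrix ι ι R} (hA : A.IsDiag) (hB : B.IsDiag) : (A * B).IsDiag := by
  rw [← hA.diagonal_diag, ← hB.diagonal_diag, diagonal_mul_diagonal]
  exact isDiag_diagonal _

theorem mul_eq_mul_diagonal_of_mulVec_transpose_eq_smul {A U : Matrix ι ι R} {μ : ι → R}
    (h : ∀ j, A *ᵥ Uᵀ j = μ j • Uᵀ j) : A * U = U * diagonal μ := by
  ext i j
  rw [mul_diagonal]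
  simpa [mul_apply, mul_comm, mulVec, dotProduct] using congrFun (h j) i

end CommSemiring

variable [DecidableEq ι]

section CommRing

variable {K : Type*} [CommRing K]

theorem IsDiag.inv {A : Matrix ι ι K} (hA : A.IsDiag) : A⁻¹.IsDiag := by
  rw [← hA.diagonal_diag, inv_diagonal]
  exact isDiag_diagonal _

theorem transpose_mul_mul_mul_inv_mul_inv_mul_mul {A B P : Matrix ι ι K}
    (hB : IsUnit B.det) (hP : IsUnit P.det) :
    Pᵀ * B * P * (P⁻¹ * B⁻¹ * A * P) = Pᵀ * A * P := by
  simp only [Matrix.mul_assoc, mul_nonsing_inv_cancel_left _ _ hP,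
    mul_nonsing_inv_cancel_left _ _ hB]

end CommRing

theorem IsHermitian.exists_mem_unitaryGroup_isDiag_of_commute {𝕜 : Type*} [RCLike 𝕜]
    {A B : Matrix ι ι 𝕜} (hA : A.IsHermitian) (hB : B.IsHermitian) (hAB : Commute A B) :
    ∃ U ∈ unitaryGroup ι 𝕜, (star U * A * U).IsDiag ∧ (star U * B * U).IsDiag := by
  have hA' : (toEuclideanLin A).IsSymmetric := isSymmetric_toEuclideanLin_iff.mpr hA
  have hB' : (toEuclideanLin B).IsSymmetric := isSymmetric_toEuclideanLin_iff.mpr hB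
  have hAB' : Commute (toEuclideanLin A) (toEuclideanLin B) := hAB.map (toLpLinAlgEquiv 2)
  have hι : Module.finrank 𝕜 (EuclideanSpace 𝕜 ι) = Fintype.card ι := finrank_euclideanSpace
  obtain ⟨b, μ, ν, hb⟩ :=
    hA'.exists_orthonormalBasis_forall_mem_eigenspace_inf_eigenspace_of_commute hι hB' hAB'
  -- the columns of `U` are the vectors `b j`
  let U := (EuclideanSpace.basisFun ι 𝕜).toBasis.toMatrix b.toBasis
  have hU : U ∈ unitaryGroup ι 𝕜 :=
    (EuclideanSpace.basisFun ι 𝕜).toMatrix_orthonormalBasis_mem_unitary b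
  have hdiag {C : Matrix ι ι 𝕜} {κ : ι → 𝕜} (hC : ∀ j, b j ∈ eigenspace (toEuclideanLin C) (κ j)) :
      star U * C * U = diagonal κ := by
    have hcol j : C *ᵥ Uᵀ j = κ j • Uᵀ j := congrArg WithLp.ofLp (mem_eigenspace_iff.mp (hC j))
    rw [Matrix.mul_assoc, mul_eq_mul_diagonal_of_mulVec_transpose_eq_smul hcol,
      ← Matrix.mul_assoc, mem_unitaryGroup_iff'.mp hU, Matrix.one_mul]
  refine ⟨U, hU, ?_, ?_⟩
  · rw [hdiag fun j => (hb j).1]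
    exact isDiag_diagonal μ
  · rw [hdiag fun j => (hb j).2]
    exact isDiag_diagonal ν

theorem IsSymm.exists_transpose_mul_self_eq_one_isDiag_of_commute {A B : Matrix ι ι ℝ}
    (hA : A.IsSymm) (hB : B.IsSymm) (hAB : Commute A B) :
    ∃ U : Matrix ι ι ℝ, Uᵀ * U = 1 ∧ (Uᵀ * A * U).IsDiag ∧ (Uᵀ * B * U).IsDiag := by
  obtain ⟨U, hU, hUA, hUB⟩ := IsHermitian.exists_mem_unitaryGroup_isDiag_of_commute
    (isHermitian_iff_isSymm.mpr hA) (isHermitian_iff_isSymm.mpr hB) hAB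
  rw [mem_unitaryGroup_iff'] at hU
  simp only [star_eq_conjTranspose, conjTranspose_eq_transpose_of_trivial] at hU hUA hUB
  exact ⟨U, hU, hUA, hUB⟩

end Matrix

/-- For symmetric A, B with B nonsingular, A and B are SDC iff there is a nonsingular P
with P⁻¹B⁻¹AP real diagonal. -/
theorem sdc_iff_similar_diagonal {n : ℕ} (A B : Matrix (Fin n) (Fin n) ℝ)
    (hA : A.IsSymm) (hB : B.IsSymm) (hBinv : IsUnit B.det) :
    (∃ P : Matrix (Fin n) (Fin n) ℝ, IsUnit P.det ∧
      (Pᵀ * A * P).IsDiag ∧ (Pᵀ * B * P).IsDiag) ↔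
    (∃ P : Matrix (Fin n) (Fin n) ℝ, IsUnit P.det ∧
      (P⁻¹ * B⁻¹ * A * P).IsDiag) := by
  constructor
  · rintro ⟨P, hP, hPA, hPB⟩
    have hM : IsUnit (Pᵀ * B * P).det := by
      simpa only [det_mul, det_transpose] using (hP.mul hBinv).mul hP
    refine ⟨P, hP, ?_⟩
    rw [← nonsing_inv_mul_cancel_left _ (P⁻¹ * B⁻¹ * A * P) hM,
      transpose_mul_mul_mul_inv_mul_inv_mul_mul hBinv hP]
    exact hPB.inv.mul hPA
  · rintro ⟨P, hP, hD⟩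
    have hMD := transpose_mul_mul_mul_inv_mul_inv_mul_mul (A := A) hBinv hP
    set M := Pᵀ * B * P
    set D := P⁻¹ * B⁻¹ * A * P
    have hM : M.IsSymm := hB.transpose_mul_mul P
    have hcomm : Commute M D := (hM.commute_iff hD.isSymm).mpr (hMD ▸ hA.transpose_mul_mul P)
    obtain ⟨U, hU, hUM, hUD⟩ :=
      hM.exists_transpose_mul_self_eq_one_isDiag_of_commute hD.isSymm hcomm
    refine ⟨P * U, by simpa only [det_mul] using hP.mul (isUnit_det_of_left_inverse hU), ?_, ?_⟩
    · have hPUA : (P * U)ᵀ * A * (P * U) = Uᵀ * M * U * (Uᵀ * D * U) :=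
        calc (P * U)ᵀ * A * (P * U) = Uᵀ * (M * D) * U := by
              rw [hMD]; simp only [transpose_mul, Matrix.mul_assoc]
          _ = Uᵀ * M * (U * Uᵀ) * D * U := by
              rw [mul_eq_one_comm.mp hU, Matrix.mul_one]
              simp only [Matrix.mul_assoc]
          _ = Uᵀ * M * U * (Uᵀ * D * U) := by simp only [Matrix.mul_assoc]
      rw [hPUA]
      exact hUM.mul hUD
    · simpa only [M, transpose_mul, Matrix.mul_assoc] using hUM
end

section
/- With the block decomposition Pᵀ(A+μB)P = diag((λ₁+μ)B₁,…,(λ_k+μ)B_k), λ₁ > … > λ_k, if B₁,…,B_{t-1} ≻ 0, B_t is indefinite, and B_{t+1},…,B_k ≺ 0, then {μ ∈ ℝ : A + μB ⪰ 0} = {-λ_t}. -/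
open Matrix

/-! After the congruence by `P`, the pencil `A + μ B` becomes block diagonal with blocks
`(λᵢ + μ) Bᵢ`, so it is positive semidefinite iff every block is. An indefinite `B_t` forces
`λ_t + μ = 0`; conversely at `μ = -λ_t` the blocks with `i < t` are nonnegative multiples of
positive definite matrices and those with `i > t` nonnegative multiples of negative definite ones,
because `λ` is strictly decreasing. -/

namespace Matrix

section BlockDiagonal

variable {o R : Type*} {m : o → Type*} [DecidableEq o]

theorem submatrix_sigmaMk_blockDiagonal' [Zero R] (M : ∀ i, Matrix (m i) (m i) R) (i : o) :
    (blockDiagonal' M).submatrix (Sigma.mk i) (Sigma.mk i) = M i := by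
  ext a b
  simp [blockDiagonal'_apply_eq]

variable [Fintype o] [∀ i, Fintype (m i)]

theorem dotProduct_blockDiagonal'_mulVec [NonUnitalNonAssocSemiring R]
    (M : ∀ i, Matrix (m i) (m i) R) (x y : (i : o) × m i → R) :
    x ⬝ᵥ (blockDiagonal' M *ᵥ y)
      = ∑ i, (fun j => x ⟨i, j⟩) ⬝ᵥ (M i *ᵥ fun j => y ⟨i, j⟩) := by
  simp only [dotProduct, mulVec, ← Finset.univ_sigma_univ, Finset.sum_sigma, Finset.mul_sum]
  refine Finset.sum_congr rfl fun i _ => Finset.sum_congr rfl fun j _ => ?_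
  rw [Fintype.sum_eq_single i fun i' hi' => Finset.sum_eq_zero fun j' _ => by
    rw [blockDiagonal'_apply_ne _ _ _ (Ne.symm hi'), zero_mul, mul_zero]]
  exact Finset.sum_congr rfl fun j' _ => by rw [blockDiagonal'_apply_eq]

theorem posSemidef_blockDiagonal'_iff [Ring R] [PartialOrder R] [StarRing R]
    [IsOrderedAddMonoid R] {M : ∀ i, Matrix (m i) (m i) R} :
    (blockDiagonal' M).PosSemidef ↔ ∀ i, (M i).PosSemidef := by
  refine ⟨fun h i => submatrix_sigmaMk_blockDiagonal' M i ▸ h.submatrix (Sigma.mk i),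
    fun h => .of_dotProduct_mulVec_nonneg ?_ fun y => ?_⟩
  · exact isHermitian_blockDiagonal'_iff.mpr fun i => (h i).isHermitian
  · rw [dotProduct_blockDiagonal'_mulVec]
    exact Finset.sum_nonneg fun i _ => (h i).dotProduct_mulVec_nonneg _

end BlockDiagonal

theorem eq_zero_of_posSemidef_smul {n : Type*} [Fintype n] {Q : Matrix n n ℝ} {c : ℝ}
    (hindef : (∃ x, 0 < x ⬝ᵥ (Q *ᵥ x)) ∧ (∃ x, x ⬝ᵥ (Q *ᵥ x) < 0))
    (h : (c • Q).PosSemidef) : c = 0 := by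
  have hquad (x : n → ℝ) : 0 ≤ c * (x ⬝ᵥ (Q *ᵥ x)) := by
    simpa only [star_trivial, smul_mulVec, dotProduct_smul, smul_eq_mul]
      using h.dotProduct_mulVec_nonneg x
  obtain ⟨⟨xp, hxp⟩, ⟨xn, hxn⟩⟩ := hindef
  have hc_nonneg : 0 ≤ c := nonneg_of_mul_nonneg_left (hquad xp) hxp
  have hc_nonpos : c ≤ 0 := by nlinarith [hquad xn]
  exact le_antisymm hc_nonpos hc_nonneg

theorem posSemidef_congr_transpose_iff {n : Type*} [Fintype n] [DecidableEq n]
    {M P : Matrix n n ℝ} (hP : IsUnit P.det) :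
    (Pᵀ * M * P).PosSemidef ↔ M.PosSemidef := by
  simpa only [star_eq_conjTranspose, conjTranspose_eq_transpose_of_trivial]
    using IsUnit.posSemidef_star_left_conjugate_iff ((isUnit_iff_isUnit_det P).mpr hP)

end Matrix

theorem psd_interval_singleton_of_indefinite_block_general {k : ℕ} {m : Fin (k + 1) → ℕ}
    (A B P : Matrix ((i : Fin (k + 1)) × Fin (m i)) ((i : Fin (k + 1)) × Fin (m i)) ℝ)
    (hP : IsUnit P.det)
    (lam : Fin (k + 1) → ℝ) (hlam : StrictAnti lam)
    (Bb : ∀ i, Matrix (Fin (m i)) (Fin (m i)) ℝ)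
    (hPB : Pᵀ * B * P = Matrix.blockDiagonal' Bb)
    (hPA : Pᵀ * A * P = Matrix.blockDiagonal' (fun i => lam i • Bb i))
    (t : Fin (k + 1))
    (hpos : ∀ i, i < t → (Bb i).PosDef)
    (hindef : (∃ x, 0 < x ⬝ᵥ (Bb t *ᵥ x)) ∧ (∃ x, x ⬝ᵥ (Bb t *ᵥ x) < 0))
    (hneg : ∀ i, t < i → (-(Bb i)).PosDef) :
    {μ : ℝ | (A + μ • B).PosSemidef} = {-(lam t)} := by
  have hpencil (μ : ℝ) :
      Pᵀ * (A + μ • B) * P = blockDiagonal' fun i => (lam i + μ) • Bb i := by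
    simp only [Matrix.mul_add, Matrix.add_mul, Matrix.mul_smul, Matrix.smul_mul, hPA, hPB,
      ← blockDiagonal'_smul, ← blockDiagonal'_add, add_smul]
    rfl
  ext μ
  rw [Set.mem_ofPred_eq, Set.mem_singleton_iff, ← posSemidef_congr_transpose_iff hP, hpencil,
    posSemidef_blockDiagonal'_iff]
  refine ⟨fun h => eq_neg_of_add_eq_zero_right (eq_zero_of_posSemidef_smul hindef (h t)), ?_⟩
  rintro rfl i
  rcases lt_trichotomy i t with hi | rfl | hi
  · exact (hpos i hi).posSemidef.smul (by linarith [hlam hi])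
  · simpa only [add_neg_cancel, zero_smul] using PosSemidef.zero
  · rw [← neg_smul_neg]
    exact (hneg i hi).posSemidef.smul (by linarith [hlam hi])

/-- Block decomposition Pᵀ(A+μB)P = diag((λᵢ+μ)Bᵢ), λ₁ > … > λ_k; if B₁,…,B_{t-1} ≻ 0,
B_t is indefinite and B_{t+1},…,B_k ≺ 0 then {μ : A + μB ⪰ 0} = {-λ_t}. -/
theorem psd_interval_singleton_of_indefinite_block {k : ℕ} {m : Fin (k + 1) → ℕ}
    (A B P : Matrix ((i : Fin (k + 1)) × Fin (m i)) ((i : Fin (k + 1)) × Fin (m i)) ℝ)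
    (hA : A.IsSymm) (hB : B.IsSymm) (hP : IsUnit P.det)
    (lam : Fin (k + 1) → ℝ) (hlam : StrictAnti lam)
    (Bb : ∀ i, Matrix (Fin (m i)) (Fin (m i)) ℝ)
    (hBbsymm : ∀ i, (Bb i).IsSymm) (hBbinv : ∀ i, IsUnit (Bb i).det)
    (hPB : Pᵀ * B * P = Matrix.blockDiagonal' Bb)
    (hPA : Pᵀ * A * P = Matrix.blockDiagonal' (fun i => lam i • Bb i))
    (t : Fin (k + 1))
    (hpos : ∀ i, i < t → (Bb i).PosDef)
    (hindef : (∃ x, 0 < x ⬝ᵥ (Bb t *ᵥ x)) ∧ (∃ x, x ⬝ᵥ (Bb t *ᵥ x) < 0))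
    (hneg : ∀ i, t < i → (-(Bb i)).PosDef) :
    {μ : ℝ | (A + μ • B).PosSemidef} = {-(lam t)} :=
  psd_interval_singleton_of_indefinite_block_general A B P hP lam hlam Bb hPB hPA t hpos hindef hneg
end

section
/- With the block decomposition Pᵀ(A+μB)P = diag((λ₁+μ)B₁,…,(λ_k+μ)B_k), λ₁ > … > λ_k, if two distinct blocks B_i and B_j (i ≠ j) are both indefinite, then {μ ∈ ℝ : A + μB ⪰ 0} = ∅. -/
/-!
Congruence by `P` turns `A + μB` into `diag((λ₁ + μ)B₁, …, (λ_k + μ)B_k)`, and positive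
semidefiniteness survives both the congruence and the passage to a diagonal block. A multiple
`c • N` of an indefinite matrix `N` is semidefinite only for `c = 0`, so two indefinite blocks
force `λ_i + μ = 0 = λ_j + μ`, contradicting `λ_i ≠ λ_j`.
-/

open Matrix

namespace Matrix

theorem PosSemidef.eq_zero_of_smul_of_indefinite {n : Type*} [Fintype n] {N : Matrix n n ℝ}
    {c : ℝ} (h : (c • N).PosSemidef) (hpos : ∃ x, 0 < x ⬝ᵥ (N *ᵥ x))
    (hneg : ∃ x, x ⬝ᵥ (N *ᵥ x) < 0) : c = 0 := by
  obtain ⟨x, hx⟩ := hpos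
  obtain ⟨y, hy⟩ := hneg
  have hcx := h.dotProduct_mulVec_nonneg x
  have hcy := h.dotProduct_mulVec_nonneg y
  simp only [smul_mulVec, dotProduct_smul, smul_eq_mul, star_trivial] at hcx hcy
  nlinarith

theorem PosSemidef.blockDiagonal'_block {R o : Type*} [CommRing R] [PartialOrder R] [StarRing R]
    [DecidableEq o] {m : o → Type*} [∀ i, Fintype (m i)] [Fintype ((i : o) × m i)]
    {M : ∀ i, Matrix (m i) (m i) R} (h : (blockDiagonal' M).PosSemidef) (i : o) :
    (M i).PosSemidef := by
  convert h.submatrix (Sigma.mk i)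
  ext a b
  simp [blockDiagonal'_apply_eq]

theorem transpose_mul_add_smul_mul_eq_blockDiagonal' {R o : Type*} [CommRing R]
    [Fintype o] [DecidableEq o] {m : o → Type*} [∀ i, Fintype (m i)]
    {A B P : Matrix ((i : o) × m i) ((i : o) × m i) R} {lam : o → R}
    {Bb : ∀ i, Matrix (m i) (m i) R} (hPB : Pᵀ * B * P = blockDiagonal' Bb)
    (hPA : Pᵀ * A * P = blockDiagonal' fun i => lam i • Bb i) (μ : R) :
    Pᵀ * (A + μ • B) * P = blockDiagonal' fun i => (lam i + μ) • Bb i := by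
  rw [mul_add, add_mul, hPA, Matrix.mul_smul, Matrix.smul_mul, hPB, ← blockDiagonal'_smul,
    ← blockDiagonal'_add]
  congr 1
  ext1 i
  simp only [Pi.add_apply, Pi.smul_apply, add_smul]

end Matrix

theorem psd_interval_empty_of_two_indefinite_general {k : ℕ} {m : Fin k → ℕ}
    (A B P : Matrix ((i : Fin k) × Fin (m i)) ((i : Fin k) × Fin (m i)) ℝ)
    (lam : Fin k → ℝ) (hlam : StrictAnti lam)
    (Bb : ∀ i, Matrix (Fin (m i)) (Fin (m i)) ℝ)
    (hPB : Pᵀ * B * P = Matrix.blockDiagonal' Bb)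
    (hPA : Pᵀ * A * P = Matrix.blockDiagonal' (fun i => lam i • Bb i))
    (i j : Fin k) (hij : i ≠ j)
    (hi : (∃ x, 0 < x ⬝ᵥ (Bb i *ᵥ x)) ∧ (∃ x, x ⬝ᵥ (Bb i *ᵥ x) < 0))
    (hj : (∃ x, 0 < x ⬝ᵥ (Bb j *ᵥ x)) ∧ (∃ x, x ⬝ᵥ (Bb j *ᵥ x) < 0)) :
    {μ : ℝ | (A + μ • B).PosSemidef} = ∅ := by
  refine Set.eq_empty_of_forall_notMem fun μ hμ => hij (hlam.injective ?_)
  have hdiag : (blockDiagonal' fun l => (lam l + μ) • Bb l).PosSemidef := by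
    simpa [transpose_mul_add_smul_mul_eq_blockDiagonal' hPB hPA μ] using
      hμ.conjTranspose_mul_mul_same P
  have hμi := (hdiag.blockDiagonal'_block i).eq_zero_of_smul_of_indefinite hi.1 hi.2
  have hμj := (hdiag.blockDiagonal'_block j).eq_zero_of_smul_of_indefinite hj.1 hj.2
  linarith

/-- Block decomposition Pᵀ(A+μB)P = diag((λᵢ+μ)Bᵢ), λ₁ > … > λ_k; if two distinct blocks
B_i and B_j are both indefinite then {μ : A + μB ⪰ 0} = ∅. -/
theorem psd_interval_empty_of_two_indefinite {k : ℕ} {m : Fin k → ℕ}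
    (A B P : Matrix ((i : Fin k) × Fin (m i)) ((i : Fin k) × Fin (m i)) ℝ)
    (hA : A.IsSymm) (hB : B.IsSymm) (hP : IsUnit P.det)
    (lam : Fin k → ℝ) (hlam : StrictAnti lam)
    (Bb : ∀ i, Matrix (Fin (m i)) (Fin (m i)) ℝ)
    (hBbsymm : ∀ i, (Bb i).IsSymm) (hBbinv : ∀ i, IsUnit (Bb i).det)
    (hPB : Pᵀ * B * P = Matrix.blockDiagonal' Bb)
    (hPA : Pᵀ * A * P = Matrix.blockDiagonal' (fun i => lam i • Bb i))
    (i j : Fin k) (hij : i ≠ j)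
    (hi : (∃ x, 0 < x ⬝ᵥ (Bb i *ᵥ x)) ∧ (∃ x, x ⬝ᵥ (Bb i *ᵥ x) < 0))
    (hj : (∃ x, 0 < x ⬝ᵥ (Bb j *ᵥ x)) ∧ (∃ x, x ⬝ᵥ (Bb j *ᵥ x) < 0)) :
    {μ : ℝ | (A + μ • B).PosSemidef} = ∅ :=
  psd_interval_empty_of_two_indefinite_general A B P lam hlam Bb hPB hPA i j hij hi hj
end

section
/- Let A, B be real symmetric n×n matrices that are SDC, with B singular and A nonsingular. Then there exists a nonsingular matrix U such that UᵀBU = diag(B₁, 0) and UᵀAU = diag(A₁, A₃), where B₁ and A₁ are symmetric of the same size p×p (p = rank B), B₁ is nonsingular, and A₃ is symmetric nonsingular of size (n-p)×(n-p). -/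
open Matrix

/-! A simultaneously diagonalizing `P` already does the job: list the indices `i` with
`(PᵀBP)ᵢᵢ ≠ 0` first (there are `rank B` of them, since `P` is invertible) and the others after.
In this order `PᵀBP` is `diag(B₁, 0)` with `B₁` diagonal and nonsingular, and `PᵀAP` is
`diag(A₁, A₃)` with `A₁, A₃` diagonal; `A₃` is nonsingular because `PᵀAP` is. -/

namespace Matrix

theorem IsDiag.eq_fromBlocks_submatrix {ι α β R : Type*} [DecidableEq ι] [DecidableEq α]
    [DecidableEq β] [Zero R] {d : Matrix ι ι R} (hd : d.IsDiag) (e : ι ≃ α ⊕ β) :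
    d = (Matrix.fromBlocks (diagonal (d.diag ∘ e.symm ∘ Sum.inl)) 0 0
      (diagonal (d.diag ∘ e.symm ∘ Sum.inr))).submatrix e e := by
  rw [fromBlocks_diagonal, ← Function.comp_assoc, ← Function.comp_assoc, Sum.elim_comp_inl_inr,
    submatrix_diagonal_equiv, Function.comp_assoc, e.symm_comp_self, Function.comp_id,
    hd.diagonal_diag]

theorem isUnit_det_diagonal_iff {ι K : Type*} [Fintype ι] [DecidableEq ι] [Field K]
    {v : ι → K} : IsUnit (diagonal v).det ↔ ∀ i, v i ≠ 0 := by
  simp [det_diagonal, Finset.prod_ne_zero_iff]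

theorem rank_transpose_mul_mul_of_isUnit_det {n K : Type*} [Fintype n] [DecidableEq n] [Field K]
    (B : Matrix n n K) {P : Matrix n n K} (hP : IsUnit P.det) : (Pᵀ * B * P).rank = B.rank := by
  rw [rank_mul_eq_left_of_isUnit_det _ _ hP,
    rank_mul_eq_right_of_isUnit_det _ _ (by rwa [det_transpose])]

end Matrix

theorem exists_equiv_sum_fin_support {ι K : Type*} [Fintype ι] [Zero K] [DecidableEq K] {r : ℕ}
    (v : ι → K) (hr : Fintype.card {i // v i ≠ 0} = r) :
    ∃ q, r + q = Fintype.card ι ∧ ∃ e : ι ≃ Fin r ⊕ Fin q,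
      (∀ i, v (e.symm (.inl i)) ≠ 0) ∧ ∀ j, v (e.symm (.inr j)) = 0 := by
  set p : ι → Prop := fun i => v i ≠ 0
  refine ⟨Fintype.card {i // ¬ p i}, ?_,
    (Equiv.sumCompl p).symm.trans ((Fintype.equivFinOfCardEq hr).sumCongr (Fintype.equivFin _)),
    fun i => ?_, fun j => ?_⟩
  · rw [← hr, ← Fintype.card_sum, Fintype.card_congr (Equiv.sumCompl p)]
  · simpa using ((Fintype.equivFinOfCardEq hr).symm i).2
  · simpa [p] using ((Fintype.equivFin {i // ¬ p i}).symm j).2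

theorem sdc_singular_B_nonsingular_A_decomposition_general {n : ℕ}
    (A B : Matrix (Fin n) (Fin n) ℝ)
    (hsdc : ∃ P : Matrix (Fin n) (Fin n) ℝ, IsUnit P.det ∧
      (Pᵀ * A * P).IsDiag ∧ (Pᵀ * B * P).IsDiag)
    (hAinv : IsUnit A.det) :
    ∃ (q : ℕ) (_ : B.rank + q = n) (e : Fin n ≃ Fin B.rank ⊕ Fin q)
      (U : Matrix (Fin n) (Fin n) ℝ) (_ : IsUnit U.det)
      (B₁ A₁ : Matrix (Fin B.rank) (Fin B.rank) ℝ) (A₃ : Matrix (Fin q) (Fin q) ℝ),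
      B₁.IsSymm ∧ A₁.IsSymm ∧ A₃.IsSymm ∧ IsUnit B₁.det ∧ IsUnit A₃.det ∧
      Uᵀ * B * U = (Matrix.fromBlocks B₁ 0 0 0).submatrix e e ∧
      Uᵀ * A * U = (Matrix.fromBlocks A₁ 0 0 A₃).submatrix e e := by
  obtain ⟨P, hP, hAdiag, hBdiag⟩ := hsdc
  have hrank : Fintype.card {i // (Pᵀ * B * P).diag i ≠ 0} = B.rank := by
    rw [← rank_diagonal, hBdiag.diagonal_diag, rank_transpose_mul_mul_of_isUnit_det B hP]
  obtain ⟨q, hq, e, hB₁, hB₃⟩ := exists_equiv_sum_fin_support _ hrank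
  have hAdiag_ne : ∀ i, (Pᵀ * A * P).diag i ≠ 0 := by
    rw [← isUnit_det_diagonal_iff, hAdiag.diagonal_diag, det_mul, det_mul, det_transpose]
    exact (hP.mul hAinv).mul hP
  have hB₃_zero : diagonal ((Pᵀ * B * P).diag ∘ e.symm ∘ Sum.inr) = 0 :=
    diagonal_eq_zero.2 (funext hB₃)
  refine ⟨q, by simpa using hq, e, P, hP, _, _, _, isSymm_diagonal _, isSymm_diagonal _,
    isSymm_diagonal _, isUnit_det_diagonal_iff.2 hB₁,
    isUnit_det_diagonal_iff.2 fun j => hAdiag_ne _, ?_, hAdiag.eq_fromBlocks_submatrix e⟩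
  rw [← hB₃_zero]
  exact hBdiag.eq_fromBlocks_submatrix e

/-- If symmetric A, B are SDC with B singular and A nonsingular, then there is a nonsingular U
putting B into diag(B₁,0) and A into diag(A₁,A₃) with B₁ nonsingular of size rank B and A₃
nonsingular. -/
theorem sdc_singular_B_nonsingular_A_decomposition {n : ℕ}
    (A B : Matrix (Fin n) (Fin n) ℝ) (hA : A.IsSymm) (hB : B.IsSymm)
    (hsdc : ∃ P : Matrix (Fin n) (Fin n) ℝ, IsUnit P.det ∧
      (Pᵀ * A * P).IsDiag ∧ (Pᵀ * B * P).IsDiag)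
    (hBsing : ¬ IsUnit B.det) (hAinv : IsUnit A.det) :
    ∃ (q : ℕ) (_ : B.rank + q = n) (e : Fin n ≃ Fin B.rank ⊕ Fin q)
      (U : Matrix (Fin n) (Fin n) ℝ) (_ : IsUnit U.det)
      (B₁ A₁ : Matrix (Fin B.rank) (Fin B.rank) ℝ) (A₃ : Matrix (Fin q) (Fin q) ℝ),
      B₁.IsSymm ∧ A₁.IsSymm ∧ A₃.IsSymm ∧ IsUnit B₁.det ∧ IsUnit A₃.det ∧
      Uᵀ * B * U = (Matrix.fromBlocks B₁ 0 0 0).submatrix e e ∧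
      Uᵀ * A * U = (Matrix.fromBlocks A₁ 0 0 A₃).submatrix e e :=
  sdc_singular_B_nonsingular_A_decomposition_general A B hsdc hAinv
end

section
/- Let A, B be real symmetric n×n matrices that are SDC with at least one of A, B nonsingular. Then the set {μ ∈ ℝ : A + μB ≻ 0} is nonempty if and only if {μ ∈ ℝ : A + μB ⪰ 0} contains more than one point. -/
/-!
Congruence by the invertible `P` that diagonalises both `A` and `B` preserves (semi)definiteness
and turns `A + μ • B` into `diagonal (a + μ • b)`, so both sets are cut out by finitely many
affine inequalities `0 < aᵢ + μ bᵢ` resp. `0 ≤ aᵢ + μ bᵢ`. The strict set is open, so a strictly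
feasible `μ` has strictly feasible neighbours. Conversely, at the midpoint of two distinct
feasible points each `aᵢ + μ bᵢ` is positive unless it vanishes at both, which forces
`aᵢ = bᵢ = 0`; nonsingularity of `A` or `B` rules this out.
-/

open Matrix Filter Topology

section AffinePencil

variable {ι : Type*} [Finite ι] {a b : ι → ℝ}

lemma exists_gt_forall_pos_of_forall_pos {μ : ℝ} (hμ : ∀ i, 0 < a i + μ * b i) :
    ∃ ν, μ < ν ∧ ∀ i, 0 < a i + ν * b i := by
  have hnhds : ∀ᶠ t in 𝓝 μ, ∀ i, 0 < a i + t * b i :=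
    eventually_all.2 fun i =>
      continuousAt_const.eventually_lt (by fun_prop : Continuous fun t => a i + t * b i).continuousAt
        (hμ i)
  obtain ⟨ν, hν, hμν⟩ := ((hnhds.filter_mono (nhdsWithin_le_nhds (s := Set.Ioi μ))).and
    self_mem_nhdsWithin).exists
  exact ⟨ν, hμν, hν⟩

lemma pos_midpoint_of_nonneg {a b μ₁ μ₂ : ℝ} (hne : μ₁ ≠ μ₂) (hab : a ≠ 0 ∨ b ≠ 0)
    (h₁ : 0 ≤ a + μ₁ * b) (h₂ : 0 ≤ a + μ₂ * b) : 0 < a + (μ₁ + μ₂) / 2 * b := by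
  by_contra! hle
  have hb : b = 0 := by
    have : (μ₁ - μ₂) * b = 0 := by nlinarith
    exact (mul_eq_zero.1 this).resolve_left (sub_ne_zero.2 hne)
  have ha : a = 0 := by subst hb; linarith
  exact hab.elim (· ha) (· hb)

lemma exists_forall_pos_iff_exists_ne_forall_nonneg (hab : ∀ i, a i ≠ 0 ∨ b i ≠ 0) :
    (∃ μ, ∀ i, 0 < a i + μ * b i) ↔
      ∃ μ₁ μ₂, μ₁ ≠ μ₂ ∧ (∀ i, 0 ≤ a i + μ₁ * b i) ∧ ∀ i, 0 ≤ a i + μ₂ * b i := by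
  constructor
  · rintro ⟨μ, hμ⟩
    obtain ⟨ν, hμν, hν⟩ := exists_gt_forall_pos_of_forall_pos hμ
    exact ⟨μ, ν, hμν.ne, fun i => (hμ i).le, fun i => (hν i).le⟩
  · rintro ⟨μ₁, μ₂, hne, h₁, h₂⟩
    exact ⟨(μ₁ + μ₂) / 2, fun i => pos_midpoint_of_nonneg hne (hab i) (h₁ i) (h₂ i)⟩

end AffinePencil

namespace Matrix

variable {n : Type*} [Fintype n] [DecidableEq n]

lemma IsDiag.apply_ne_zero_of_isUnit_det {K : Type*} [Field K] {M : Matrix n n K}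
    (hM : M.IsDiag) (hdet : IsUnit M.det) (i : n) : M i i ≠ 0 := by
  rw [← hM.diagonal_diag, det_diagonal, isUnit_iff_ne_zero, Finset.prod_ne_zero_iff] at hdet
  exact hdet i (Finset.mem_univ i)

lemma isUnit_det_transpose_mul_mul {R : Type*} [CommRing R] {M P : Matrix n n R}
    (hP : IsUnit P.det) (hM : IsUnit M.det) : IsUnit (Pᵀ * M * P).det := by
  rw [det_mul, det_mul, det_transpose]
  exact (hP.mul hM).mul hP

lemma transpose_mul_add_smul_mul_eq_diagonal {R : Type*} [CommRing R] {A B P : Matrix n n R}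
    (hA : (Pᵀ * A * P).IsDiag) (hB : (Pᵀ * B * P).IsDiag) (μ : R) :
    Pᵀ * (A + μ • B) * P = diagonal ((Pᵀ * A * P).diag + μ • (Pᵀ * B * P).diag) := by
  calc Pᵀ * (A + μ • B) * P = Pᵀ * A * P + μ • (Pᵀ * B * P) := by
        rw [Matrix.mul_add, Matrix.add_mul, Matrix.mul_smul, Matrix.smul_mul]
    _ = diagonal (Pᵀ * A * P).diag + μ • diagonal (Pᵀ * B * P).diag := by
        rw [hA.diagonal_diag, hB.diagonal_diag]
    _ = diagonal ((Pᵀ * A * P).diag + μ • (Pᵀ * B * P).diag) := by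
        rw [← diagonal_smul, diagonal_add]
        rfl

variable {A B P : Matrix n n ℝ}

lemma posDef_add_smul_iff_of_isDiag (hP : IsUnit P.det) (hA : (Pᵀ * A * P).IsDiag)
    (hB : (Pᵀ * B * P).IsDiag) (μ : ℝ) :
    (A + μ • B).PosDef ↔ ∀ i, 0 < (Pᵀ * A * P) i i + μ * (Pᵀ * B * P) i i := by
  rw [← ((isUnit_iff_isUnit_det P).2 hP).posDef_star_left_conjugate_iff, star_eq_conjTranspose,
    conjTranspose_eq_transpose_of_trivial, transpose_mul_add_smul_mul_eq_diagonal hA hB,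
    posDef_diagonal_iff]
  rfl

lemma posSemidef_add_smul_iff_of_isDiag (hP : IsUnit P.det) (hA : (Pᵀ * A * P).IsDiag)
    (hB : (Pᵀ * B * P).IsDiag) (μ : ℝ) :
    (A + μ • B).PosSemidef ↔ ∀ i, 0 ≤ (Pᵀ * A * P) i i + μ * (Pᵀ * B * P) i i := by
  rw [← ((isUnit_iff_isUnit_det P).2 hP).posSemidef_star_left_conjugate_iff, star_eq_conjTranspose,
    conjTranspose_eq_transpose_of_trivial, transpose_mul_add_smul_mul_eq_diagonal hA hB,
    posSemidef_diagonal_iff]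
  rfl

end Matrix

theorem pd_nonempty_iff_psd_more_than_one_point_general {n : ℕ}
    (A B : Matrix (Fin n) (Fin n) ℝ)
    (hsdc : ∃ P : Matrix (Fin n) (Fin n) ℝ, IsUnit P.det ∧
      (Pᵀ * A * P).IsDiag ∧ (Pᵀ * B * P).IsDiag)
    (hinv : IsUnit A.det ∨ IsUnit B.det) :
    {μ : ℝ | (A + μ • B).PosDef}.Nonempty ↔
      ∃ μ₁ μ₂ : ℝ, μ₁ ≠ μ₂ ∧ (A + μ₁ • B).PosSemidef ∧ (A + μ₂ • B).PosSemidef := by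
  obtain ⟨P, hP, hA, hB⟩ := hsdc
  have hab : ∀ i, (Pᵀ * A * P) i i ≠ 0 ∨ (Pᵀ * B * P) i i ≠ 0 := fun i =>
    hinv.imp (fun h => hA.apply_ne_zero_of_isUnit_det (isUnit_det_transpose_mul_mul hP h) i)
      (fun h => hB.apply_ne_zero_of_isUnit_det (isUnit_det_transpose_mul_mul hP h) i)
  simp only [Set.Nonempty, Set.mem_ofPred_eq, posDef_add_smul_iff_of_isDiag hP hA hB,
    posSemidef_add_smul_iff_of_isDiag hP hA hB]
  exact exists_forall_pos_iff_exists_ne_forall_nonneg hab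

/-- For SDC symmetric A, B with A or B nonsingular: {μ : A+μB ≻ 0} is nonempty iff
{μ : A+μB ⪰ 0} has more than one point. -/
theorem pd_nonempty_iff_psd_more_than_one_point {n : ℕ}
    (A B : Matrix (Fin n) (Fin n) ℝ) (hA : A.IsSymm) (hB : B.IsSymm)
    (hsdc : ∃ P : Matrix (Fin n) (Fin n) ℝ, IsUnit P.det ∧
      (Pᵀ * A * P).IsDiag ∧ (Pᵀ * B * P).IsDiag)
    (hinv : IsUnit A.det ∨ IsUnit B.det) :
    {μ : ℝ | (A + μ • B).PosDef}.Nonempty ↔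
      ∃ μ₁ μ₂ : ℝ, μ₁ ≠ μ₂ ∧ (A + μ₁ • B).PosSemidef ∧ (A + μ₂ • B).PosSemidef :=
  pd_nonempty_iff_psd_more_than_one_point_general A B hsdc hinv
end

section
/- Let K be a real Jordan matrix in Jordan normal form (a block diagonal matrix of Jordan blocks C(λ₁),…,C(λ_k) with distinct eigenvalues λ₁,…,λ_k). If S is a real symmetric matrix such that SK is symmetric, then S is block diagonal, S = diag(S₁,…,S_k), with dim S_i = dim C(λ_i). -/
open Matrix

/-- Uhlig's lemma: if K is a real Jordan matrix whose indices are grouped by eigenvalue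
blocks via `blk` (monotone), with distinct eigenvalues `lam`, and S is symmetric with SK
symmetric, then S is block diagonal with the same partition: S a b = 0 whenever a and b
belong to different eigenvalue blocks. -/
theorem symm_mul_jordan_symm_block_diag {n k : ℕ}
    (K S : Matrix (Fin n) (Fin n) ℝ) (blk : Fin n → Fin k) (lam : Fin k → ℝ)
    (hblk : Monotone blk) (hlam : Function.Injective lam)
    (hKdiag : ∀ a, K a a = lam (blk a))
    (hKoff : ∀ a b : Fin n, a ≠ b → (b : ℕ) ≠ (a : ℕ) + 1 → K a b = 0)
    (hKsup : ∀ a b : Fin n, (b : ℕ) = (a : ℕ) + 1 →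
      (K a b = 0 ∨ K a b = 1) ∧ (K a b = 1 → blk a = blk b))
    (hS : S.IsSymm) (hSK : (S * K).IsSymm) :
    ∀ a b : Fin n, blk a ≠ blk b → S a b = 0 := by
  -- entrywise symmetry facts
  have hSsym : ∀ a b : Fin n, S a b = S b a := by
    intro a b
    conv_lhs => rw [← hS]
    rfl
  have hSKsym : ∀ a b : Fin n, (S * K) a b = (S * K) b a := by
    intro a b
    conv_lhs => rw [← hSK]
    rfl
  -- expand (S*K) a b
  have hmul : ∀ a b : Fin n, (S * K) a b =
      S a b * K b b + ∑ c : Fin n, if (b : ℕ) = (c : ℕ) + 1 then S a c * K c b else 0 := by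
    intro a b
    rw [Matrix.mul_apply]
    have hterm : ∀ c : Fin n, S a c * K c b =
        (if c = b then S a c * K c b else 0) +
        (if (b : ℕ) = (c : ℕ) + 1 then S a c * K c b else 0) := by
      intro c
      by_cases h1 : c = b
      · subst h1
        simp
      · by_cases h2 : (b : ℕ) = (c : ℕ) + 1
        · simp [h1, h2]
        · simp [h1, h2, hKoff c b h1 h2]
    rw [Finset.sum_congr rfl (fun c _ => hterm c), Finset.sum_add_distrib]
    congr 1
    simp
  -- the superdiagonal contribution vanishes, given the inductive hypothesis
  have hP : ∀ a b : Fin n, blk a ≠ blk b →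
      (∀ a' b' : Fin n, (a' : ℕ) + (b' : ℕ) < (a : ℕ) + (b : ℕ) →
        blk a' ≠ blk b' → S a' b' = 0) →
      (∑ c : Fin n, if (b : ℕ) = (c : ℕ) + 1 then S a c * K c b else 0) = 0 := by
    intro a b hab ih
    apply Finset.sum_eq_zero
    intro c _
    by_cases h : (b : ℕ) = (c : ℕ) + 1
    · simp only [h, if_true]
      rcases hKsup c b h with ⟨h01, hbl⟩
      rcases h01 with h0 | h1
      · rw [h0, mul_zero]
      · have hcb : blk c = blk b := hbl h1
        have hac : blk a ≠ blk c := fun hh => hab (hh.trans hcb)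
        have hlt : (a : ℕ) + (c : ℕ) < (a : ℕ) + (b : ℕ) := by omega
        rw [ih a c hlt hac, zero_mul]
    · simp [h]
  -- strong induction on (a:ℕ) + (b:ℕ)
  suffices H : ∀ m, ∀ a b : Fin n, (a : ℕ) + (b : ℕ) = m → blk a ≠ blk b → S a b = 0 by
    intro a b hab
    exact H ((a : ℕ) + (b : ℕ)) a b rfl hab
  intro m
  induction m using Nat.strong_induction_on with
  | _ m ih =>
    intro a b hm hab
    have ih' : ∀ a' b' : Fin n, (a' : ℕ) + (b' : ℕ) < (a : ℕ) + (b : ℕ) →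
        blk a' ≠ blk b' → S a' b' = 0 := by
      intro a' b' hlt h
      exact ih _ (hm ▸ hlt) a' b' rfl h
    have key := hSKsym a b
    rw [hmul a b, hmul b a] at key
    rw [hP a b hab ih', hP b a (Ne.symm hab)
      (by intro a' b' hlt h; exact ih' a' b' (by omega) h)] at key
    rw [hKdiag, hKdiag, hSsym b a] at key
    have hne : lam (blk b) ≠ lam (blk a) := fun h => hab (hlam h).symm
    have : S a b * (lam (blk b) - lam (blk a)) = 0 := by ring_nf; linarith [key]
    rcases mul_eq_zero.mp this with h | h
    · exact h
    · exact absurd (by linarith : lam (blk b) = lam (blk a)) hne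
end

section
/- Let A, B be real symmetric n×n matrices with B nonsingular, and suppose A, B are not SDC. If A ⪰ 0 then {μ ∈ ℝ : A + μB ⪰ 0} = {0}. -/
/-!
If `μ ≠ 0` and `A + μB ⪰ 0`, a vector killed by both `A` and `A + μB` is killed by `B`, hence
is zero; so the sum `2A + μB` of these two positive semidefinite matrices is positive definite.
Congruence by `S⁻¹`, where `S = √(2A + μB)`, turns `2A + μB` into the identity, and an orthogonal
change of basis then diagonalizes `A` as well. Since `B` is a combination of `2A + μB` and `A`,
the same congruence diagonalizes `B`, contradicting the failure of SDC.
-/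

open Matrix
open scoped ComplexOrder

namespace Matrix

variable {𝕜 n : Type*} [RCLike 𝕜] [Fintype n]

theorem PosSemidef.posDef_add_of_mulVec_eq_zero {P Q : Matrix n n 𝕜} (hP : P.PosSemidef)
    (hQ : Q.PosSemidef) (h : ∀ x, P *ᵥ x = 0 → Q *ᵥ x = 0 → x = 0) : (P + Q).PosDef := by
  refine .of_dotProduct_mulVec_pos (hP.1.add hQ.1) fun x hx => ?_
  rw [add_mulVec, dotProduct_add]
  have hPx := hP.dotProduct_mulVec_nonneg x
  have hQx := hQ.dotProduct_mulVec_nonneg x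
  refine lt_of_le_of_ne (add_nonneg hPx hQx) fun hsum => hx ?_
  obtain ⟨hPx0, hQx0⟩ := (add_eq_zero_iff_of_nonneg hPx hQx).mp hsum.symm
  exact h x ((hP.dotProduct_mulVec_zero_iff x).mp hPx0) ((hQ.dotProduct_mulVec_zero_iff x).mp hQx0)

open scoped MatrixOrder in
theorem PosDef.exists_conjTranspose_mul_mul_eq_one_and_isDiag [DecidableEq n]
    {D A : Matrix n n 𝕜} (hD : D.PosDef) (hA : A.IsHermitian) :
    ∃ P : Matrix n n 𝕜, IsUnit P ∧ Pᴴ * D * P = 1 ∧ (Pᴴ * A * P).IsDiag := by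
  set S := CFC.sqrt D
  have hSS : S * S = D := CFC.sqrt_mul_sqrt_self D hD.posSemidef.nonneg
  have hS : S.IsHermitian := (CFC.sqrt_nonneg D).posSemidef.1
  have hSunit : IsUnit S := isUnit_of_mul_isUnit_left (hSS.symm ▸ hD.isUnit : IsUnit (S * S))
  have hM : (S⁻¹ * A * S⁻¹).IsHermitian := by
    simpa [hS.inv.eq] using isHermitian_conjTranspose_mul_mul S⁻¹ hA
  have hdiag := hM.conjStarAlgAut_star_eigenvectorUnitary
  rw [Unitary.conjStarAlgAut_star_apply] at hdiag
  set U := hM.eigenvectorUnitary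
  have hP : (S⁻¹ * (U : Matrix n n 𝕜))ᴴ = star (U : Matrix n n 𝕜) * S⁻¹ := by
    rw [conjTranspose_mul, hS.inv.eq, star_eq_conjTranspose]
  refine ⟨S⁻¹ * U, (isUnit_nonsing_inv_iff.mpr hSunit).mul Unitary.isUnit_coe, ?_, ?_⟩
  · rw [hP, ← hSS]
    have hSdet := (isUnit_iff_isUnit_det S).mp hSunit
    simp only [mul_assoc, nonsing_inv_mul_cancel_left _ _ hSdet,
      mul_nonsing_inv_cancel_left _ _ hSdet, Unitary.coe_star_mul_self]
  · rw [hP]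
    simp only [mul_assoc] at hdiag ⊢
    rw [hdiag]
    exact isDiag_diagonal _

end Matrix

theorem not_sdc_psd_set_eq_zero_general {n : ℕ}
    (A B : Matrix (Fin n) (Fin n) ℝ)
    (hBinv : IsUnit B.det)
    (hnsdc : ¬ ∃ P : Matrix (Fin n) (Fin n) ℝ, IsUnit P.det ∧
      (Pᵀ * A * P).IsDiag ∧ (Pᵀ * B * P).IsDiag)
    (hApsd : A.PosSemidef) :
    {μ : ℝ | (A + μ • B).PosSemidef} = {0} := by
  ext μ
  simp only [Set.mem_ofPred_eq, Set.mem_singleton_iff]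
  refine ⟨fun hC => ?_, fun hμ => by simpa [hμ] using hApsd⟩
  by_contra hμ
  have hBinj : Function.Injective B.mulVec :=
    mulVec_injective_iff_isUnit.mpr ((isUnit_iff_isUnit_det B).mpr hBinv)
  have hD : (A + (A + μ • B)).PosDef :=
    hApsd.posDef_add_of_mulVec_eq_zero hC fun x hAx hCx => hBinj <| by
      simpa [add_mulVec, smul_mulVec, hAx, hμ] using hCx
  obtain ⟨P, hP, hPD, hPA⟩ :=
    hD.exists_conjTranspose_mul_mul_eq_one_and_isDiag hApsd.isHermitian
  rw [conjTranspose_eq_transpose_of_trivial] at hPD hPA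
  refine hnsdc ⟨P, (isUnit_iff_isUnit_det P).mp hP, hPA, ?_⟩
  have hB : B = μ⁻¹ • (A + (A + μ • B) - (2 : ℝ) • A) := by
    rw [two_smul, add_sub_add_left_eq_sub, add_sub_cancel_left, smul_smul, inv_mul_cancel₀ hμ,
      one_smul]
  rw [hB, Matrix.mul_smul, Matrix.smul_mul, Matrix.mul_sub, Matrix.sub_mul, hPD,
    Matrix.mul_smul, Matrix.smul_mul]
  exact (isDiag_one.sub (hPA.smul 2)).smul μ⁻¹

/-- For symmetric A, B with B nonsingular, not SDC, and A ⪰ 0: {μ : A + μB ⪰ 0} = {0}. -/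
theorem not_sdc_psd_set_eq_zero {n : ℕ}
    (A B : Matrix (Fin n) (Fin n) ℝ) (hA : A.IsSymm) (hB : B.IsSymm)
    (hBinv : IsUnit B.det)
    (hnsdc : ¬ ∃ P : Matrix (Fin n) (Fin n) ℝ, IsUnit P.det ∧
      (Pᵀ * A * P).IsDiag ∧ (Pᵀ * B * P).IsDiag)
    (hApsd : A.PosSemidef) :
    {μ : ℝ | (A + μ • B).PosSemidef} = {0} :=
  not_sdc_psd_set_eq_zero_general A B hBinv hnsdc hApsd
end
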